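/- arXiv:2605.07171 — 2 statements merged into one kernel-verified Lean document; each statement's English description precedes it below -/
import Mathlib

section
/- Let A ≥ 1 be a natural number, let δ ∈ (0,1), and let Δ̃₁, …, Δ̃_A be positive reals with Δ̃ := √(Σ_{k=1}^A Δ̃_k²). For n ≥ 1 set β(n) := √(log(1/δ)/(2n)). Then there exists a natural number n ≥ 1 with n ≤ (3√A + 1)² · log(1/δ) / (2 Δ̃²) + 1 such that Σ_{k=1}^A (Δ̃_k − 3β(n))² > β(n)²; consequently the least such n is at most (3√A + 1)² · log(1/δ) / (2 Δ̃²) + 1. -/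
/-! Write b = β(n). The reverse triangle inequality in ℝ^A, applied to (Δ̃_k) and the constant
vector 3b, gives Σ (Δ̃_k − 3b)² ≥ (Δ̃ − 3b√A)². Hence the sum exceeds b² as soon as
(3√A + 1) b < Δ̃, that is, as soon as n > (3√A + 1)² log(1/δ) / (2Δ̃²); the least integer above
this threshold is at most the threshold plus one. -/

open Finset Real

theorem sq_sqrt_sum_sq_sub_mul_sqrt_card_le {ι : Type*} [Fintype ι] (a : ι → ℝ) {c : ℝ}
    (hc : 0 ≤ c) :
    (√(∑ k, a k ^ 2) - c * √(Fintype.card ι)) ^ 2 ≤ ∑ k, (a k - c) ^ 2 := by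
  set x : EuclideanSpace ℝ ι := WithLp.toLp 2 a
  set y : EuclideanSpace ℝ ι := WithLp.toLp 2 fun _ => c
  have norm_eq (z : EuclideanSpace ℝ ι) : ‖z‖ = √(∑ k, z k ^ 2) := by
    simp [EuclideanSpace.norm_eq]
  have hx : ‖x‖ = √(∑ k, a k ^ 2) := norm_eq x
  have hy : ‖y‖ = c * √(Fintype.card ι) := by
    rw [norm_eq, ← sqrt_sq hc, ← sqrt_mul (sq_nonneg c)]
    simp [y, mul_comm]
  have hxy : ‖x - y‖ ^ 2 = ∑ k, (a k - c) ^ 2 := by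
    rw [norm_eq, sq_sqrt (by positivity)]
    rfl
  rw [← hx, ← hy, ← hxy, ← sq_abs]
  exact pow_le_pow_left₀ (abs_nonneg _) (abs_norm_sub_norm_le x y) 2

theorem mul_sqrt_div_lt_of_lt {K L D n : ℝ} (hK : 0 ≤ K) (hL : 0 ≤ L) (hD : 0 < D)
    (hn : K ^ 2 * L / (2 * D ^ 2) < n) : K * √(L / (2 * n)) < D := by
  have hn0 : 0 < n := (by positivity : 0 ≤ K ^ 2 * L / (2 * D ^ 2)).trans_lt hn
  rw [← sqrt_sq hK, ← sqrt_mul (sq_nonneg K), sqrt_lt' hD, ← mul_div_assoc,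
    div_lt_iff₀ (by positivity)]
  rw [div_lt_iff₀ (by positivity)] at hn
  linarith

theorem sampling_rounds_bound
    (A : ℕ) (hA : 1 ≤ A) (δ : ℝ) (hδ0 : 0 < δ) (hδ1 : δ < 1)
    (Δ : Fin A → ℝ) (hΔ : ∀ k, 0 < Δ k)
    (Δtot : ℝ) (hΔtot : Δtot = Real.sqrt (∑ k, Δ k ^ 2))
    (β : ℕ → ℝ) (hβ : ∀ n : ℕ, β n = Real.sqrt (Real.log (1 / δ) / (2 * n))) :
    (∃ n : ℕ, 1 ≤ n ∧
        (n : ℝ) ≤ (3 * Real.sqrt A + 1) ^ 2 * Real.log (1 / δ) / (2 * Δtot ^ 2) + 1 ∧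
        (∑ k, (Δ k - 3 * β n) ^ 2) > (β n) ^ 2) ∧
    ((sInf {n : ℕ | 1 ≤ n ∧ (∑ k, (Δ k - 3 * β n) ^ 2) > (β n) ^ 2} : ℕ) : ℝ) ≤
      (3 * Real.sqrt A + 1) ^ 2 * Real.log (1 / δ) / (2 * Δtot ^ 2) + 1 := by
  set C := (3 * √A + 1) ^ 2 * log (1 / δ) / (2 * Δtot ^ 2)
  have hL : 0 ≤ log (1 / δ) := log_nonneg (by rw [le_div_iff₀ hδ0]; linarith)
  have hΔtot_pos : 0 < Δtot := by
    rw [hΔtot, sqrt_pos]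
    exact sum_pos (fun k _ => pow_pos (hΔ k) 2) (univ_nonempty_iff.mpr ⟨⟨0, hA⟩⟩)
  have hC : 0 ≤ C := by positivity
  set n := ⌊C⌋₊ + 1
  have hCn : C < n := by exact_mod_cast Nat.lt_floor_add_one C
  have hnC : (n : ℝ) ≤ C + 1 := by push_cast [n]; linarith [Nat.floor_le hC]
  have hβ0 : 0 ≤ β n := by rw [hβ]; positivity
  have hβ_small : (3 * √A + 1) * β n < Δtot := by
    rw [hβ]; exact mul_sqrt_div_lt_of_lt (by positivity) hL hΔtot_pos hCn
  have hgap : β n ^ 2 < ∑ k, (Δ k - 3 * β n) ^ 2 := calc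
    β n ^ 2 < (Δtot - 3 * β n * √A) ^ 2 := by
      apply pow_lt_pow_left₀ _ hβ0 two_ne_zero; linarith
    _ ≤ ∑ k, (Δ k - 3 * β n) ^ 2 := by
      simpa [hΔtot] using sq_sqrt_sum_sq_sub_mul_sqrt_card_le Δ (by positivity : 0 ≤ 3 * β n)
  have hn : 1 ≤ n := Nat.le_add_left 1 _
  have hmin : sInf {m : ℕ | 1 ≤ m ∧ (∑ k, (Δ k - 3 * β m) ^ 2) > β m ^ 2} ≤ n :=
    Nat.sInf_le ⟨hn, hgap⟩
  exact ⟨⟨n, hn, hnC, hgap⟩, le_trans (by exact_mod_cast hmin) hnC⟩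
end

section
/- Let A ≥ 1 be a natural number, let Δ̃₁, …, Δ̃_A be positive reals with Δ̃ := √(Σ_{k=1}^A Δ̃_k²), and let β be a real number with 0 ≤ β and (3√A + 1)·β < Δ̃. Then Σ_{k=1}^A (Δ̃_k − 3β)² > β². -/
/-! By Cauchy–Schwarz, `∑ Δ k ≤ √A · Δtot`, so expanding the squares gives
`∑ (Δ k - 3β)² ≥ (Δtot - 3√A β)²`; the hypothesis says `Δtot - 3√A β > β ≥ 0`. -/

open Finset

theorem Finset.sum_le_sqrt_card_mul_sqrt_sum_sq {ι : Type*} (s : Finset ι) (f : ι → ℝ) :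
    ∑ i ∈ s, f i ≤ √(#s : ℝ) * √(∑ i ∈ s, f i ^ 2) := by
  rw [← Real.sqrt_mul (Nat.cast_nonneg _)]
  exact Real.le_sqrt_of_sq_le sq_sum_le_card_mul_sum_sq

theorem Finset.sum_sub_const_sq {ι : Type*} (s : Finset ι) (f : ι → ℝ) (c : ℝ) :
    ∑ i ∈ s, (f i - c) ^ 2 = ∑ i ∈ s, f i ^ 2 - 2 * c * ∑ i ∈ s, f i + #s * c ^ 2 := by
  simp only [sub_sq, sum_add_distrib, sum_sub_distrib, sum_const, nsmul_eq_mul, mul_sum]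
  congr 2
  exact sum_congr rfl fun i _ => by ring

theorem Finset.sq_sqrt_sum_sq_sub_le_sum_sub_const_sq {ι : Type*} (s : Finset ι) (f : ι → ℝ)
    {c : ℝ} (hc : 0 ≤ c) :
    (√(∑ i ∈ s, f i ^ 2) - √(#s : ℝ) * c) ^ 2 ≤ ∑ i ∈ s, (f i - c) ^ 2 := by
  have hCS := s.sum_le_sqrt_card_mul_sqrt_sum_sq f
  rw [sum_sub_const_sq, sub_sq, mul_pow, Real.sq_sqrt (sum_nonneg fun i _ => sq_nonneg _),
    Real.sq_sqrt (Nat.cast_nonneg _)]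
  nlinarith [mul_le_mul_of_nonneg_left hCS hc]

theorem shrunken_gaps_exceed_general
    (A : ℕ)
    (Δ : Fin A → ℝ)
    (Δtot : ℝ) (hΔtot : Δtot = Real.sqrt (∑ k, Δ k ^ 2))
    (β : ℝ) (hβ0 : 0 ≤ β) (hβ : (3 * Real.sqrt A + 1) * β < Δtot) :
    (∑ k, (Δ k - 3 * β) ^ 2) > β ^ 2 := by
  have hlower := univ.sq_sqrt_sum_sq_sub_le_sum_sub_const_sq Δ (by positivity : 0 ≤ 3 * β)
  rw [card_univ, Fintype.card_fin, ← hΔtot] at hlower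
  have hgap : β < Δtot - √(A : ℝ) * (3 * β) := by linarith
  calc β ^ 2 < (Δtot - √(A : ℝ) * (3 * β)) ^ 2 := pow_lt_pow_left₀ hgap hβ0 two_ne_zero
    _ ≤ ∑ k, (Δ k - 3 * β) ^ 2 := hlower

theorem shrunken_gaps_exceed
    (A : ℕ) (hA : 1 ≤ A)
    (Δ : Fin A → ℝ) (hΔ : ∀ k, 0 < Δ k)
    (Δtot : ℝ) (hΔtot : Δtot = Real.sqrt (∑ k, Δ k ^ 2))
    (β : ℝ) (hβ0 : 0 ≤ β) (hβ : (3 * Real.sqrt A + 1) * β < Δtot) :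
    (∑ k, (Δ k - 3 * β) ^ 2) > β ^ 2 :=
  shrunken_gaps_exceed_general A Δ Δtot hΔtot β hβ0 hβ
end
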